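/- Let m = 2 and suppose h has an orthogonal basis with Gram matrix diag(1, −ε) where ε is a non-square unit of R, and the involution induced on A/r is the identity. Then h(v,v) is a unit of R for every primitive vector v ∈ V; in fact the set of lengths of primitive vectors equals R*. -/

import Mathlib

/-!
Every `a ∈ A` is congruent modulo the nonunits to an element `s` of `R`: `a + a*` lies in `R`
and `a - a*` is a nonunit, so `a ≡ (a + a*)/2`. Hence the length `a* a - ε c* c` of
`a b₀ + c b₁` is congruent to `s² - ε t²`. The vector is primitive iff `a` or `c` is a unit, i.e.
iff `(s, t)` is nonzero modulo `𝔪`, and since `ε` stays a non-square in the residue field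
(the squares of `1 + 𝔪` fill `1 + 𝔪`), `s² - ε t²` is then a unit. Conversely, in a finite
field of odd order every element has the form `s² - ε t²` by counting, and such a
representation of `r mod 𝔪` lifts to `R` after rescaling by a square of `1 + 𝔪`.
-/

open MulOpposite

/-- A `*`-hermitian form on a right `A`-module `V` (right modules are encoded as
modules over the opposite ring `Aᵐᵒᵖ`): it is additive and `A`-linear in the second
variable and satisfies `h v u = (h u v)*`. -/
structure HermitianForm (A V : Type*) [Ring A] [StarRing A] [AddCommGroup V]
    [Module Aᵐᵒᵖ V] where
  toFun : V → V → A
  add_right : ∀ u v w : V, toFun u (v + w) = toFun u v + toFun u w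
  smul_right : ∀ (a : A) (u v : V), toFun u (op a • v) = toFun u v * a
  conj_symm : ∀ u v : V, toFun v u = star (toFun u v)

namespace HermitianForm

variable {A V : Type*} [Ring A] [StarRing A] [AddCommGroup V] [Module Aᵐᵒᵖ V]

/-- Non-degeneracy: the map `u ↦ h u -` is a bijection of `V` onto the dual module. -/
def Nondeg (h : HermitianForm A V) : Prop :=
  ∀ φ : V →ₗ[Aᵐᵒᵖ] A, ∃! u : V, ∀ v : V, h.toFun u v = φ v

end HermitianForm

/-- A vector of the free module `V` of rank `m` is primitive if it belongs to a basis. -/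
def IsPrimitive (A : Type*) {V : Type*} [Ring A] [AddCommGroup V] [Module Aᵐᵒᵖ V]
    (m : ℕ) (v : V) : Prop :=
  ∃ (b : Module.Basis (Fin m) Aᵐᵒᵖ V) (i : Fin m), b i = v

namespace IsLocalRing

variable {S : Type*} [Ring S] [IsLocalRing S]

instance : IsDedekindFiniteMonoid S where
  mul_eq_one_symm {x y} hxy := by
    have hidem : IsIdempotentElem (y * x) := by
      rw [IsIdempotentElem, mul_assoc, ← mul_assoc x, hxy, one_mul]
    rcases isUnit_or_isUnit_of_add_one (add_sub_cancel (y * x) 1) with hu | hu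
    · exact (IsIdempotentElem.iff_eq_one_of_isUnit hu).1 hidem
    · have hx : x * (1 - y * x) = 0 := by
        rw [mul_sub, mul_one, ← mul_assoc, hxy, one_mul, sub_self]
      rw [hu.mul_left_eq_zero.1 hx, zero_mul] at hxy
      exact absurd hxy zero_ne_one

instance : IsLocalRing Sᵐᵒᵖ :=
  .of_isUnit_or_isUnit_of_isUnit_add fun a b hab => by
    simpa only [isUnit_unop] using isUnit_or_isUnit_of_isUnit_add (isUnit_unop.2 hab)

variable (S) in
def nonunitsTwoSidedIdeal : TwoSidedIdeal S :=
  .mk' (nonunits S) (by simp) nonunits_add (fun hx => by simpa using hx)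
    (fun hy hu => hy (isUnit_of_mul_isUnit_right hu))
    (fun hx hu => hx (isUnit_of_mul_isUnit_left hu))

theorem mem_nonunitsTwoSidedIdeal {x : S} : x ∈ nonunitsTwoSidedIdeal S ↔ ¬IsUnit x :=
  TwoSidedIdeal.mem_mk' ..

theorem isUnit_of_sub_mem_nonunitsTwoSidedIdeal {x y : S} (hx : IsUnit x)
    (hxy : x - y ∈ nonunitsTwoSidedIdeal S) : IsUnit y := by
  rw [← add_sub_cancel y x] at hx
  exact (isUnit_or_isUnit_of_isUnit_add hx).resolve_right (mem_nonunitsTwoSidedIdeal.1 hxy)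

end IsLocalRing

theorem TwoSidedIdeal.star_mul_self_sub_mul_self_mem {A : Type*} [Ring A] [StarRing A]
    (I : TwoSidedIdeal A) {a x : A} (ha : a - star a ∈ I) (hx : a - x ∈ I) :
    star a * a - x * x ∈ I := by
  rw [show star a * a - x * x = star a * (a - x) - (a - star a) * x + (a - x) * x by noncomm_ring]
  exact I.add_mem (I.sub_mem (I.mul_mem_left _ _ hx) (I.mul_mem_right _ _ ha))
    (I.mul_mem_right _ _ hx)

namespace Module.Basis

variable {ι S M : Type*} [Ring S] [AddCommGroup M] [Module S M]

theorem exists_basis_apply_eq_of_isUnit_repr (b : Basis ι S M) {i : ι} {v : M}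
    (hv : IsUnit (b.repr v i)) : ∃ b' : Basis ι S M, b' i = v := by
  have hunit : IsUnit (1 + b.coord i (v - b i)) := by simpa using hv
  refine ⟨b.map (LinearEquiv.dilatransvection hunit), ?_⟩
  simp [LinearEquiv.dilatransvection.apply]

theorem exists_isUnit_repr_of_apply_eq [Fintype ι] [IsLocalRing S] (b b' : Basis ι S M)
    {i : ι} {v : M} (hv : b' i = v) : ∃ j, IsUnit (b.repr v j) := by
  have hsum : ∑ j, b.repr v j * b'.repr (b j) i = 1 := by
    rw [← Finsupp.single_eq_same (a := i) (b := (1 : S)), ← b'.repr_self, hv]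
    conv_rhs => rw [← b.sum_repr v]
    simp only [map_sum, map_smul, Finsupp.finsetSum_apply, Finsupp.smul_apply, smul_eq_mul]
  obtain ⟨j, -, hj⟩ := IsLocalRing.exists_of_isUnit_sum (hsum ▸ isUnit_one)
  exact ⟨j, isUnit_of_mul_isUnit_left hj⟩

end Module.Basis

theorem isPrimitive_iff_exists_isUnit_repr {A V : Type*} [Ring A] [IsLocalRing A]
    [AddCommGroup V] [Module Aᵐᵒᵖ V] {m : ℕ} (b : Module.Basis (Fin m) Aᵐᵒᵖ V) {v : V} :
    IsPrimitive A m v ↔ ∃ i, IsUnit (b.repr v i) where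
  mp := fun ⟨b', _, hv⟩ => b.exists_isUnit_repr_of_apply_eq b' hv
  mpr := fun ⟨i, hi⟩ => (b.exists_basis_apply_eq_of_isUnit_repr hi).imp fun _ hb' => ⟨i, hb'⟩

namespace HermitianForm

variable {A V : Type*} [Ring A] [StarRing A] [AddCommGroup V] [Module Aᵐᵒᵖ V]
  (h : HermitianForm A V)

theorem add_left (u v w : V) : h.toFun (u + v) w = h.toFun u w + h.toFun v w := by
  rw [h.conj_symm, h.add_right, star_add, ← h.conj_symm, ← h.conj_symm]

theorem smul_left (a : A) (u v : V) : h.toFun (op a • u) v = star a * h.toFun u v := by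
  rw [h.conj_symm, h.smul_right, star_mul, ← h.conj_symm]

theorem apply_smul_add_smul_self_of_apply_eq_zero {x y : V} (hxy : h.toFun x y = 0) (a c : A) :
    h.toFun (op a • x + op c • y) (op a • x + op c • y) =
      star a * h.toFun x x * a + star c * h.toFun y y * c := by
  have hyx : h.toFun y x = 0 := by rw [h.conj_symm, hxy, star_zero]
  simp only [add_left, add_right, smul_left, smul_right, hxy, hyx, mul_zero, add_zero, zero_add,
    mul_assoc]

end HermitianForm

theorem sq_sub_mul_sq_eq_zero_iff {K : Type*} [Field K] {ε : K} (hε : ¬IsSquare ε) {x y : K} :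
    x ^ 2 - ε * y ^ 2 = 0 ↔ x = 0 ∧ y = 0 := by
  refine ⟨fun h => ?_, fun ⟨hx, hy⟩ => by simp [hx, hy]⟩
  have hy : y = 0 := by
    by_contra hy
    exact hε ⟨x / y, by field_simp; linear_combination -h⟩
  simp_all

theorem FiniteField.exists_sq_sub_mul_sq_eq {K : Type*} [Field K] [Finite K]
    (hK : Odd (Nat.card K)) {ε : K} (hε : ε ≠ 0) (x : K) : ∃ s t, s ^ 2 - ε * t ^ 2 = x := by
  have := Fintype.ofFinite K
  obtain ⟨s, t, hst⟩ := FiniteField.exists_root_sum_quadratic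
    (Polynomial.degree_X_pow_sub_C two_pos x)
    (Polynomial.degree_C_mul_X_pow 2 (neg_ne_zero.2 hε))
    (Nat.card_eq_fintype_card (α := K) ▸ Nat.odd_iff.1 hK)
  refine ⟨s, t, ?_⟩
  simp only [Polynomial.eval_sub, Polynomial.eval_mul, Polynomial.eval_pow, Polynomial.eval_X,
    Polynomial.eval_C] at hst
  linear_combination hst

namespace IsLocalRing

variable {R : Type*} [CommRing R] [IsLocalRing R]

theorem exists_sq_mul_eq_of_residue_eq
    (hsq : ∀ x ∈ maximalIdeal R, ∃ y ∈ maximalIdeal R, (1 + y) ^ 2 = 1 + x)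
    {r w : R} (hr : IsUnit r) (hrw : residue R w = residue R r) : ∃ d, d ^ 2 * w = r := by
  obtain ⟨y, hy, hsq⟩ := hsq (w * hr.unit⁻¹ - 1) <| by
    rw [← residue_eq_zero_iff, map_sub, map_mul, hrw, ← map_mul, hr.mul_val_inv, map_one,
      sub_self]
  have hunit : IsUnit (1 + y) := by
    simpa using isUnit_one_sub_self_of_mem_nonunits (-y) (by simpa using hy)
  have hw : w = (1 + y) ^ 2 * r := by
    rw [hsq, add_sub_cancel, mul_assoc, hr.val_inv_mul, mul_one]
  exact ⟨↑hunit.unit⁻¹, by rw [hw, ← mul_assoc, ← mul_pow, hunit.val_inv_mul, one_pow, one_mul]⟩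

theorem not_isSquare_residue
    (hsq : ∀ x ∈ maximalIdeal R, ∃ y ∈ maximalIdeal R, (1 + y) ^ 2 = 1 + x)
    {ε : R} (hε : IsUnit ε) (hεsq : ¬IsSquare ε) : ¬IsSquare (residue R ε) := by
  rintro ⟨z, hz⟩
  obtain ⟨t, rfl⟩ := residue_surjective z
  obtain ⟨d, hd⟩ := exists_sq_mul_eq_of_residue_eq hsq hε (w := t ^ 2) (by rw [hz, map_pow, sq])
  exact hεsq ⟨d * t, by rw [← hd]; ring⟩

theorem isUnit_sq_sub_mul_sq_iff {ε : R} (hε : ¬IsSquare (residue R ε)) {s t : R} :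
    IsUnit (s ^ 2 - ε * t ^ 2) ↔ IsUnit s ∨ IsUnit t := by
  simp only [← residue_ne_zero_iff_isUnit, map_sub, map_mul, map_pow, ne_eq,
    sq_sub_mul_sq_eq_zero_iff hε, not_and_or]

theorem exists_sq_sub_mul_sq_eq [Finite (ResidueField R)] (hodd : Odd (Nat.card (ResidueField R)))
    (hsq : ∀ x ∈ maximalIdeal R, ∃ y ∈ maximalIdeal R, (1 + y) ^ 2 = 1 + x)
    {ε : R} (hε : IsUnit ε) {r : R} (hr : IsUnit r) : ∃ s t, s ^ 2 - ε * t ^ 2 = r := by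
  obtain ⟨s', t', hst'⟩ := FiniteField.exists_sq_sub_mul_sq_eq hodd
    ((residue_ne_zero_iff_isUnit ε).2 hε) (residue R r)
  obtain ⟨s, rfl⟩ := residue_surjective s'
  obtain ⟨t, rfl⟩ := residue_surjective t'
  obtain ⟨d, hd⟩ := exists_sq_mul_eq_of_residue_eq hsq hr (w := s ^ 2 - ε * t ^ 2)
    (by simpa using hst')
  exact ⟨d * s, d * t, by rw [← hd]; ring⟩

end IsLocalRing

section FixedRing

variable {A R : Type*} [Ring A] [StarRing A] [CommRing R] [Algebra R A]

theorem isUnit_algebraMap_iff_of_range_eq_fixed (hinj : Function.Injective (algebraMap R A))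
    (hfix : ∀ a : A, star a = a ↔ a ∈ Set.range (algebraMap R A)) {r : R} :
    IsUnit (algebraMap R A r) ↔ IsUnit r := by
  refine ⟨fun hu => ?_, (·.map _)⟩
  obtain ⟨s, hs⟩ := (hfix _).1 <| by rw [← Ring.inverse_star, (hfix _).2 ⟨r, rfl⟩]
  exact .of_mul_eq_one s (hinj (by rw [map_mul, hs, Ring.mul_inverse_cancel _ hu, map_one]))

variable [IsLocalRing A]

theorem exists_sub_algebraMap_mem_nonunitsTwoSidedIdeal
    (hfix : ∀ a : A, star a = a ↔ a ∈ Set.range (algebraMap R A))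
    (hid : ∀ a : A, a - star a ∈ nonunits A) (h2 : IsUnit (2 : R)) (a : A) :
    ∃ s : R, a - algebraMap R A s ∈ IsLocalRing.nonunitsTwoSidedIdeal A := by
  obtain ⟨w, hw⟩ := (hfix (a + star a)).1 (by rw [star_add, star_star, add_comm])
  set c := algebraMap R A ↑h2.unit⁻¹
  have hc : c + c = 1 := by
    rw [← two_mul, ← map_ofNat (algebraMap R A) 2, ← map_mul, h2.mul_val_inv, map_one]
  refine ⟨w * ↑h2.unit⁻¹, ?_⟩
  rw [map_mul, hw, show a - (a + star a) * c = (a - star a) * c by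
    calc a - (a + star a) * c = a * (c + c) - (a + star a) * c := by rw [hc, mul_one]
      _ = (a - star a) * c := by noncomm_ring]
  exact TwoSidedIdeal.mul_mem_right _ _ _ (IsLocalRing.mem_nonunitsTwoSidedIdeal.2 (hid a))

theorem isUnit_star_mul_self_sub_algebraMap_mul_star_mul_self [IsLocalRing R]
    (hinj : Function.Injective (algebraMap R A))
    (hfix : ∀ a : A, star a = a ↔ a ∈ Set.range (algebraMap R A))
    (hid : ∀ a : A, a - star a ∈ nonunits A) (h2 : IsUnit (2 : R))
    {ε : R} (hε : ¬IsSquare (IsLocalRing.residue R ε)) {a c : A} (hac : IsUnit a ∨ IsUnit c) :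
    IsUnit (star a * a - algebraMap R A ε * (star c * c)) := by
  set J := IsLocalRing.nonunitsTwoSidedIdeal A
  obtain ⟨s, hs⟩ := exists_sub_algebraMap_mem_nonunitsTwoSidedIdeal hfix hid h2 a
  obtain ⟨t, ht⟩ := exists_sub_algebraMap_mem_nonunitsTwoSidedIdeal hfix hid h2 c
  have hlift {x : A} {u : R} (hx : IsUnit x) (hxu : x - algebraMap R A u ∈ J) : IsUnit u :=
    (isUnit_algebraMap_iff_of_range_eq_fixed hinj hfix).1
      (IsLocalRing.isUnit_of_sub_mem_nonunitsTwoSidedIdeal hx hxu)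
  have hst : IsUnit s ∨ IsUnit t := hac.imp (hlift · hs) (hlift · ht)
  refine IsLocalRing.isUnit_of_sub_mem_nonunitsTwoSidedIdeal
    (((IsLocalRing.isUnit_sq_sub_mul_sq_iff hε).2 hst).map (algebraMap R A)) ?_
  have hdiff : algebraMap R A (s ^ 2 - ε * t ^ 2) - (star a * a - algebraMap R A ε * (star c * c))
      = -(star a * a - algebraMap R A s * algebraMap R A s)
        + algebraMap R A ε * (star c * c - algebraMap R A t * algebraMap R A t) := by
    simp only [map_sub, map_mul, map_pow]
    noncomm_ring
  rw [hdiff]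
  exact J.add_mem (J.neg_mem (J.star_mul_self_sub_mul_self_mem
    (IsLocalRing.mem_nonunitsTwoSidedIdeal.2 (hid a)) hs))
    (J.mul_mem_left _ _ (J.star_mul_self_sub_mul_self_mem
    (IsLocalRing.mem_nonunitsTwoSidedIdeal.2 (hid c)) ht))

end FixedRing

theorem stmt_12_general {A V : Type*} [Ring A] [StarRing A] [IsLocalRing A]
    [AddCommGroup V] [Module Aᵐᵒᵖ V]
    (h2 : IsUnit (2 : A))
    (R : Type*) [CommRing R] [IsLocalRing R] [Algebra R A]
    (hinj : Function.Injective (algebraMap R A))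
    (hfix : ∀ a : A, star a = a ↔ a ∈ Set.range (algebraMap R A))
    [Finite (IsLocalRing.ResidueField R)]
    (hodd : Odd (Nat.card (IsLocalRing.ResidueField R)))
    (hsq : ∀ x ∈ IsLocalRing.maximalIdeal R,
      ∃ y ∈ IsLocalRing.maximalIdeal R, (1 + y) ^ 2 = 1 + x)
    (hid : ∀ a : A, a - star a ∈ nonunits A)
    (ε : R) (hεu : IsUnit ε) (hεnsq : ¬ ∃ u : R, u ^ 2 = ε)
    (h : HermitianForm A V)
    (b : Module.Basis (Fin 2) Aᵐᵒᵖ V)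
    (hb01 : h.toFun (b 0) (b 1) = 0)
    (hb0 : h.toFun (b 0) (b 0) = 1)
    (hb1 : h.toFun (b 1) (b 1) = - algebraMap R A ε) :
    (∀ v : V, IsPrimitive A 2 v →
      ∃ r : R, IsUnit r ∧ h.toFun v v = algebraMap R A r) ∧
    (∀ r : R, IsUnit r →
      ∃ v : V, IsPrimitive A 2 v ∧ h.toFun v v = algebraMap R A r) := by
  set φ := algebraMap R A
  have h2R : IsUnit (2 : R) :=
    (isUnit_algebraMap_iff_of_range_eq_fixed hinj hfix).1 (by rwa [map_ofNat])
  have hεk : ¬IsSquare (IsLocalRing.residue R ε) :=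
    IsLocalRing.not_isSquare_residue hsq hεu fun ⟨u, hu⟩ => hεnsq ⟨u, by rw [sq, hu]⟩
  have hlen (a c : A) : h.toFun (op a • b 0 + op c • b 1) (op a • b 0 + op c • b 1) =
      star a * a - φ ε * (star c * c) := by
    rw [h.apply_smul_add_smul_self_of_apply_eq_zero hb01, hb0, hb1, mul_one, mul_neg, neg_mul,
      ← Algebra.commutes, mul_assoc, sub_eq_add_neg]
  refine ⟨fun v hv => ?_, fun r hr => ?_⟩
  · obtain ⟨i, hi⟩ := (isPrimitive_iff_exists_isUnit_repr b).1 hv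
    have hv : v = op (unop (b.repr v 0)) • b 0 + op (unop (b.repr v 1)) • b 1 := by
      simpa only [op_unop, Fin.sum_univ_two] using (b.sum_repr v).symm
    obtain ⟨r, hr⟩ := (hfix (h.toFun v v)).1 (h.conj_symm v v).symm
    refine ⟨r, (isUnit_algebraMap_iff_of_range_eq_fixed hinj hfix).1 ?_, hr.symm⟩
    rw [hr, hv, hlen]
    refine isUnit_star_mul_self_sub_algebraMap_mul_star_mul_self hinj hfix hid h2R hεk ?_
    fin_cases i
    · exact .inl (isUnit_unop.2 hi)
    · exact .inr (isUnit_unop.2 hi)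
  · obtain ⟨s, t, rfl⟩ := IsLocalRing.exists_sq_sub_mul_sq_eq hodd hsq hεu hr
    refine ⟨op (φ s) • b 0 + op (φ t) • b 1, (isPrimitive_iff_exists_isUnit_repr b).2 ?_, ?_⟩
    · rcases (IsLocalRing.isUnit_sq_sub_mul_sq_iff hεk).1 hr with hs | ht
      · exact ⟨0, by simpa using hs.map φ⟩
      · exact ⟨1, by simpa using ht.map φ⟩
    · rw [hlen, (hfix _).2 ⟨s, rfl⟩, (hfix _).2 ⟨t, rfl⟩]
      simp only [map_sub, map_mul, sq]

/-- Lemma 3.8(b), non-isotropic case: for a rank 2 form of type `{1, -ε}` with the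
induced involution on `A/𝔯` the identity, the lengths of primitive vectors are
exactly the units of the fixed ring `R`. -/
theorem stmt_12 {A V : Type*} [Ring A] [StarRing A] [IsLocalRing A]
    [AddCommGroup V] [Module Aᵐᵒᵖ V]
    (hcent : ∀ a : A, star a = a → a ∈ Set.center A)
    (h2 : IsUnit (2 : A))
    (R : Type*) [CommRing R] [IsLocalRing R] [Algebra R A]
    (hinj : Function.Injective (algebraMap R A))
    (hfix : ∀ a : A, star a = a ↔ a ∈ Set.range (algebraMap R A))
    [Finite (IsLocalRing.ResidueField R)]
    (hodd : Odd (Nat.card (IsLocalRing.ResidueField R)))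
    (hsq : ∀ x ∈ IsLocalRing.maximalIdeal R,
      ∃ y ∈ IsLocalRing.maximalIdeal R, (1 + y) ^ 2 = 1 + x)
    (hid : ∀ a : A, a - star a ∈ nonunits A)
    (ε : R) (hεu : IsUnit ε) (hεnsq : ¬ ∃ u : R, u ^ 2 = ε)
    (h : HermitianForm A V) (hnd : h.Nondeg)
    (b : Module.Basis (Fin 2) Aᵐᵒᵖ V)
    (hb01 : h.toFun (b 0) (b 1) = 0)
    (hb0 : h.toFun (b 0) (b 0) = 1)
    (hb1 : h.toFun (b 1) (b 1) = - algebraMap R A ε) :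
    (∀ v : V, IsPrimitive A 2 v →
      ∃ r : R, IsUnit r ∧ h.toFun v v = algebraMap R A r) ∧
    (∀ r : R, IsUnit r →
      ∃ v : V, IsPrimitive A 2 v ∧ h.toFun v v = algebraMap R A r) :=
  stmt_12_general h2 R hinj hfix hodd hsq hid ε hεu hεnsq h b hb01 hb0 hb1
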